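/- arXiv:2604.00164 — 2 statements merged into one kernel-verified Lean document; each statement's English description precedes it below -/
import Mathlib

section
/- Let H be a d-dimensional complex Hilbert space with orthonormal basis {|n⟩}, and for p<q define Y_{pq} = i(|p⟩⟨q| − |q⟩⟨p|). Define the Y-twirl map E(ρ) = (1/d)(ρ + Σ_{p<q} Y_{pq} ρ Y_{pq}). Then for any density operator ρ, the output ρ' = E(ρ) satisfies ρ'_{mm} = 1/d for all m, and ρ'_{mn} = (2/d)·i·Im(ρ_{mn}) for all m ≠ n. -/
open Complex Matrix ComplexOrder

/-- The antisymmetric generator `Y_{pq} = i(|p⟩⟨q| − |q⟩⟨p|)`. -/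
noncomputable def Ygen (d : ℕ) (p q : Fin d) : Matrix (Fin d) (Fin d) ℂ :=
  Complex.I • (Matrix.single p q 1 - Matrix.single q p 1)

/-- The Y-twirl map `E(ρ) = (1/d)(ρ + Σ_{p<q} Y_{pq} ρ Y_{pq})`. -/
noncomputable def Ytwirl (d : ℕ) (ρ : Matrix (Fin d) (Fin d) ℂ) : Matrix (Fin d) (Fin d) ℂ :=
  ((d : ℂ)⁻¹) • (ρ + ∑ p : Fin d, ∑ q : Fin d,
    if p < q then Ygen d p q * ρ * Ygen d p q else 0)

lemma std_mul_std (d : ℕ) (ρ : Matrix (Fin d) (Fin d) ℂ) (p q r s i j : Fin d) :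
    (Matrix.single p q (1:ℂ) * ρ * Matrix.single r s (1:ℂ)) i j =
      if i = p ∧ j = s then ρ q r else 0 := by
  simp [Matrix.mul_apply, Matrix.single, Finset.sum_ite_eq, ite_and]
  aesop

lemma Ygen_entry (d : ℕ) (ρ : Matrix (Fin d) (Fin d) ℂ) (p q i j : Fin d) :
    (Ygen d p q * ρ * Ygen d p q) i j =
      -((if i = p ∧ j = q then ρ q p else 0) - (if i = p ∧ j = p then ρ q q else 0)
        - (if i = q ∧ j = q then ρ p p else 0) + (if i = q ∧ j = p then ρ p q else 0)) := by
  have h : Ygen d p q * ρ * Ygen d p q =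
      -((Matrix.single p q (1:ℂ) * ρ * Matrix.single p q 1)
        - (Matrix.single p q (1:ℂ) * ρ * Matrix.single q p 1)
        - (Matrix.single q p (1:ℂ) * ρ * Matrix.single p q 1)
        + (Matrix.single q p (1:ℂ) * ρ * Matrix.single q p 1)) := by
    simp only [Ygen, Matrix.smul_mul, Matrix.mul_smul, sub_mul, mul_sub, smul_sub, smul_add,
      smul_smul, Complex.I_mul_I, neg_one_smul, neg_sub, neg_neg]
    abel
  rw [h]
  simp only [Matrix.neg_apply, Matrix.add_apply, Matrix.sub_apply, std_mul_std]

lemma sum_entry (d : ℕ) (ρ : Matrix (Fin d) (Fin d) ℂ) (i j : Fin d) :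
    (∑ p : Fin d, ∑ q : Fin d, if p < q then Ygen d p q * ρ * Ygen d p q else 0) i j =
      ∑ p : Fin d, ∑ q : Fin d, if p < q then
        -((if i = p ∧ j = q then ρ q p else 0) - (if i = p ∧ j = p then ρ q q else 0)
          - (if i = q ∧ j = q then ρ p p else 0) + (if i = q ∧ j = p then ρ p q else 0))
        else 0 := by
  simp only [Matrix.sum_apply]
  refine Finset.sum_congr rfl fun p _ => Finset.sum_congr rfl fun q _ => ?_
  by_cases h : p < q
  · rw [if_pos h, if_pos h, Ygen_entry]
  · rw [if_neg h, if_neg h, Matrix.zero_apply]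

lemma sum_diag (d : ℕ) (ρ : Matrix (Fin d) (Fin d) ℂ) (m : Fin d) :
    (∑ p : Fin d, ∑ q : Fin d, if p < q then Ygen d p q * ρ * Ygen d p q else 0) m m =
      ρ.trace - ρ m m := by
  rw [sum_entry]
  have step1 : ∀ p q : Fin d, (if p < q then
        -((if m = p ∧ m = q then ρ q p else 0) - (if m = p ∧ m = p then ρ q q else 0)
          - (if m = q ∧ m = q then ρ p p else 0) + (if m = q ∧ m = p then ρ p q else 0))
        else 0) =
      (if p = m then (if p < q then ρ q q else 0) else 0)
        + (if q = m then (if p < q then ρ p p else 0) else 0) := by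
    intro p q
    by_cases h : p < q
    · by_cases h1 : p = m <;> by_cases h2 : q = m <;>
        simp [h, h1, h2] <;> aesop
    · simp [h]
  simp only [step1, Finset.sum_add_distrib]
  have A : (∑ p : Fin d, ∑ q : Fin d,
      (if p = m then (if p < q then ρ q q else 0) else 0)) =
      ∑ q : Fin d, if m < q then ρ q q else 0 := by
    rw [Finset.sum_comm]
    refine Finset.sum_congr rfl fun q _ => ?_
    rw [Finset.sum_ite_eq' Finset.univ m (fun p => if p < q then ρ q q else 0)]
    simp
  have B : (∑ p : Fin d, ∑ q : Fin d,
      (if q = m then (if p < q then ρ p p else 0) else 0)) =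
      ∑ p : Fin d, if p < m then ρ p p else 0 := by
    refine Finset.sum_congr rfl fun p _ => ?_
    rw [Finset.sum_ite_eq' Finset.univ m (fun q => if p < q then ρ p p else 0)]
    simp
  rw [A, B, Matrix.trace, ← Finset.sum_add_distrib]
  have key : ∀ k : Fin d, ((if m < k then ρ k k else 0) + (if k < m then ρ k k else 0)) =
      ρ k k - (if k = m then ρ k k else 0) := by
    intro k
    rcases lt_trichotomy k m with h | h | h
    · simp [h, asymm h, ne_of_lt h]
    · subst h; simp [lt_irrefl]
    · simp [h, asymm h, ne_of_gt h]
  simp only [key, Finset.sum_sub_distrib, Finset.sum_ite_eq' Finset.univ m fun k => ρ k k]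
  simp [Matrix.diag]

lemma sum_off (d : ℕ) (ρ : Matrix (Fin d) (Fin d) ℂ) (m n : Fin d) (hmn : m ≠ n) :
    (∑ p : Fin d, ∑ q : Fin d, if p < q then Ygen d p q * ρ * Ygen d p q else 0) m n =
      -ρ n m := by
  rw [sum_entry]
  have step1 : ∀ p q : Fin d, (if p < q then
        -((if m = p ∧ n = q then ρ q p else 0) - (if m = p ∧ n = p then ρ q q else 0)
          - (if m = q ∧ n = q then ρ p p else 0) + (if m = q ∧ n = p then ρ p q else 0))
        else 0) =
      (if q = n then (if p = m then (if m < n then -ρ n m else 0) else 0) else 0)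
        + (if q = m then (if p = n then (if n < m then -ρ n m else 0) else 0) else 0) := by
    intro p q
    by_cases h : p < q
    · by_cases h1 : p = m <;> by_cases h2 : q = n <;> by_cases h3 : p = n <;>
        by_cases h4 : q = m <;> simp_all <;> aesop
    · by_cases h1 : p = m <;> by_cases h2 : q = n <;> by_cases h3 : p = n <;>
        by_cases h4 : q = m <;> simp_all <;> aesop
  simp only [step1, Finset.sum_add_distrib]
  have A : (∑ p : Fin d, ∑ q : Fin d,
      (if q = n then (if p = m then (if m < n then -ρ n m else 0) else 0) else 0)) =
      if m < n then -ρ n m else 0 := by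
    simp only [Finset.sum_ite_eq' Finset.univ n, Finset.mem_univ, if_true]
    rw [Finset.sum_ite_eq' Finset.univ m]
    simp
  have B : (∑ p : Fin d, ∑ q : Fin d,
      (if q = m then (if p = n then (if n < m then -ρ n m else 0) else 0) else 0)) =
      if n < m then -ρ n m else 0 := by
    simp only [Finset.sum_ite_eq' Finset.univ m, Finset.mem_univ, if_true]
    rw [Finset.sum_ite_eq' Finset.univ n]
    simp
  rw [A, B]
  rcases lt_trichotomy m n with h | h | h
  · simp [h, asymm h]
  · exact absurd h hmn
  · simp [h, asymm h]

theorem stmt1 (d : ℕ) (hd : 0 < d) (ρ : Matrix (Fin d) (Fin d) ℂ)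
    (hpsd : ρ.PosSemidef) (htr : ρ.trace = 1) :
    (∀ m : Fin d, (Ytwirl d ρ) m m = (d : ℂ)⁻¹) ∧
    (∀ m n : Fin d, m ≠ n →
      (Ytwirl d ρ) m n = (2 / (d : ℂ)) * Complex.I * ((ρ m n).im : ℂ)) := by
  constructor
  · intro m
    simp only [Ytwirl, Matrix.smul_apply, Matrix.add_apply, sum_diag, htr, smul_eq_mul]
    ring
  · intro m n hmn
    simp only [Ytwirl, Matrix.smul_apply, Matrix.add_apply, sum_off d ρ m n hmn]
    have hherm : ρ n m = (starRingEnd ℂ) (ρ m n) := by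
      have := hpsd.isHermitian
      rw [Matrix.IsHermitian] at this
      conv_lhs => rw [← this]
      simp [Matrix.conjTranspose_apply]
    rw [hherm]
    have : ρ m n - (starRingEnd ℂ) (ρ m n) = 2 * (ρ m n).im * Complex.I := by
      rw [Complex.sub_conj]
      push_cast
      ring
    rw [sub_eq_add_neg] at this
    rw [smul_eq_mul, this]
    field_simp
end

section
/- Under the hypotheses of the previous statement, the extended KD distribution of ρ is nonpositive (i.e. Σ_{j,k,l}|Q*_{jkl}(ρ)| > 1) if and only if ρ has nonzero ℓ1-coherence in the basis {|a_j⟩}, equivalently iff ρ is not diagonal in {|a_j⟩}. -/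
open Complex Matrix ComplexOrder

/-- Inner product `⟨u|v⟩ = Σ_t conj(u t) v t` on `ℂ^d`. -/
noncomputable def ip {d : ℕ} (u v : Fin d → ℂ) : ℂ :=
  ∑ t, (starRingEnd ℂ) (u t) * v t

/-- Matrix element `⟨u|ρ|v⟩`. -/
noncomputable def sandwich {d : ℕ} (u : Fin d → ℂ) (ρ : Matrix (Fin d) (Fin d) ℂ)
    (v : Fin d → ℂ) : ℂ :=
  ∑ s, ∑ t, (starRingEnd ℂ) (u s) * ρ s t * v t

/-- Extended Kirkwood–Dirac distribution
`Q*_{jkl}(ρ) = ⟨a_k|b_l⟩⟨b_l|a_j⟩⟨a_j|ρ|a_k⟩`. -/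
noncomputable def extKD {d : ℕ} (a b : Fin d → Fin d → ℂ) (ρ : Matrix (Fin d) (Fin d) ℂ)
    (j k l : Fin d) : ℂ :=
  ip (a k) (b l) * ip (b l) (a j) * sandwich (a j) ρ (a k)

lemma ip_conj {d : ℕ} (u v : Fin d → ℂ) : ip u v = (starRingEnd ℂ) (ip v u) := by
  simp [ip, map_sum, mul_comm]

/-- The extended KD distribution is nonpositive iff the state has nonzero
ℓ₁-coherence, equivalently iff it is not diagonal, in the basis `{|a_j⟩}`. -/
theorem stmt6 (d : ℕ) (hd : 0 < d) (a b : Fin d → Fin d → ℂ)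
    (ha : ∀ i j, ip (a i) (a j) = if i = j then 1 else 0)
    (hb : ∀ i j, ip (b i) (b j) = if i = j then 1 else 0)
    (hmub : ∀ j l, ‖ip (a j) (b l)‖ = 1 / Real.sqrt d)
    (ρ : Matrix (Fin d) (Fin d) ℂ) (hpsd : ρ.PosSemidef) (htr : ρ.trace = 1) :
    ((1 < ∑ j, ∑ k, ∑ l, ‖extKD a b ρ j k l‖) ↔
      (0 < ∑ j, ∑ k, if j ≠ k then ‖sandwich (a j) ρ (a k)‖ else 0)) ∧
    ((1 < ∑ j, ∑ k, ∑ l, ‖extKD a b ρ j k l‖) ↔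
      ∃ j k, j ≠ k ∧ sandwich (a j) ρ (a k) ≠ 0) := by
  have hd0 : (d : ℝ) ≠ 0 := Nat.cast_ne_zero.mpr hd.ne'
  -- Step 1: sum over l
  have key : ∀ j k, ∑ l, ‖extKD a b ρ j k l‖
      = ‖sandwich (a j) ρ (a k)‖ := by
    intro j k
    have h1 : ∀ l, ‖extKD a b ρ j k l‖
        = (1 / d) * ‖sandwich (a j) ρ (a k)‖ := by
      intro l
      have h2 : ‖ip (b l) (a j)‖ = 1 / Real.sqrt d := by
        rw [ip_conj]; simpa using hmub j l
      rw [extKD, norm_mul, norm_mul, hmub, h2]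
      have : (1 / Real.sqrt d) * (1 / Real.sqrt d) = 1 / d := by
        rw [div_mul_div_comm, one_mul, Real.mul_self_sqrt (Nat.cast_nonneg d)]
      rw [this]
    simp only [h1, Finset.sum_const, Finset.card_univ, Fintype.card_fin, nsmul_eq_mul]
    field_simp
  -- Step 2: completeness
  have horth : ∀ s t, (∑ j, (starRingEnd ℂ) (a j s) * a j t) = if s = t then 1 else 0 := by
    intro s t
    set M : Matrix (Fin d) (Fin d) ℂ := Matrix.of fun j t => a j t with hM
    have hMM : M * Mᴴ = 1 := by
      ext i j
      have h := ha j i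
      simp only [ip] at h
      simp only [Matrix.mul_apply, Matrix.conjTranspose_apply, Matrix.one_apply, hM,
        Matrix.of_apply]
      calc ∑ t, a i t * star (a j t) = ∑ t, (starRingEnd ℂ) (a j t) * a i t := by
            refine Finset.sum_congr rfl fun t _ => ?_
            rw [starRingEnd_apply]; ring
        _ = if j = i then 1 else 0 := h
        _ = if i = j then 1 else 0 := by simp [eq_comm]
    have hMM2 : Mᴴ * M = 1 := mul_eq_one_comm.mp hMM
    have := congrFun (congrFun hMM2 s) t
    simpa [Matrix.mul_apply, Matrix.conjTranspose_apply, Matrix.one_apply, hM] using this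
  -- Step 3: trace identity
  have htrsum : ∑ j, sandwich (a j) ρ (a j) = 1 := by
    have : ∑ j, sandwich (a j) ρ (a j)
        = ∑ s, ∑ t, ρ s t * (∑ j, (starRingEnd ℂ) (a j s) * a j t) := by
      simp only [sandwich]
      rw [Finset.sum_comm]
      refine Finset.sum_congr rfl fun s _ => ?_
      rw [Finset.sum_comm]
      refine Finset.sum_congr rfl fun t _ => ?_
      rw [Finset.mul_sum]
      refine Finset.sum_congr rfl fun j _ => ?_
      ring
    rw [this]
    have : ∀ s : Fin d, ∑ t, ρ s t * (∑ j, (starRingEnd ℂ) (a j s) * a j t) = ρ s s := by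
      intro s
      simp only [horth]
      rw [Finset.sum_eq_single s] <;> simp (config := {contextual := true}) [eq_comm]
    simp only [this]
    simpa [Matrix.trace, Matrix.diag] using htr
  -- Step 4: diagonal positivity
  have hdiag : ∀ j, 0 ≤ sandwich (a j) ρ (a j) := by
    intro j
    have := hpsd.dotProduct_mulVec_nonneg (a j)
    convert this using 1
    simp only [sandwich, dotProduct, Matrix.mulVec, Pi.star_apply, Finset.mul_sum]
    refine Finset.sum_congr rfl fun s _ => Finset.sum_congr rfl fun t _ => ?_
    simp [dotProduct, mul_assoc]
  have hdre : ∀ j, ‖sandwich (a j) ρ (a j)‖ = (sandwich (a j) ρ (a j)).re := by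
    intro j
    obtain ⟨hre, him⟩ := (Complex.le_def.mp (hdiag j))
    simp only [Complex.zero_re, Complex.zero_im] at hre him
    rw [Complex.norm_def, Complex.normSq_apply, ← him, mul_zero, add_zero,
      Real.sqrt_mul_self hre]
  have hdiagsum : ∑ j, ‖sandwich (a j) ρ (a j)‖ = 1 := by
    simp only [hdre]
    rw [← Complex.re_sum, htrsum, Complex.one_re]
  -- Step 5: decompose
  have hsplit : ∑ j, ∑ k, ∑ l, ‖extKD a b ρ j k l‖
      = 1 + ∑ j, ∑ k, if j ≠ k then ‖sandwich (a j) ρ (a k)‖ else 0 := by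
    simp only [key]
    have : ∀ j : Fin d, ∑ k, ‖sandwich (a j) ρ (a k)‖
        = ‖sandwich (a j) ρ (a j)‖
          + ∑ k, if j ≠ k then ‖sandwich (a j) ρ (a k)‖ else 0 := by
      intro j
      have hk : ∀ k : Fin d, ‖sandwich (a j) ρ (a k)‖ =
          (if j = k then ‖sandwich (a j) ρ (a k)‖ else 0)
          + (if j ≠ k then ‖sandwich (a j) ρ (a k)‖ else 0) := by
        intro k; by_cases h : j = k <;> simp [h]
      rw [Finset.sum_congr rfl (fun k _ => hk k), Finset.sum_add_distrib]
      congr 1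
      simp
    simp only [this, Finset.sum_add_distrib, hdiagsum]
  rw [hsplit]
  have hnonneg : ∀ j : Fin d, 0 ≤ ∑ k, if j ≠ k then ‖sandwich (a j) ρ (a k)‖ else 0 :=
    fun j => Finset.sum_nonneg fun k _ => by positivity
  constructor
  · exact lt_add_iff_pos_right 1
  · rw [lt_add_iff_pos_right]
    constructor
    · intro hpos
      by_contra hno
      push_neg at hno
      have : ∑ j, ∑ k, (if j ≠ k then ‖sandwich (a j) ρ (a k)‖ else 0) = 0 := by
        refine Finset.sum_eq_zero fun j _ => Finset.sum_eq_zero fun k _ => ?_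
        by_cases h : j = k
        · simp [h]
        · simp only [h, ne_eq, not_false_eq_true, if_true]
          rw [hno j k h]; exact norm_zero
      rw [this] at hpos; exact lt_irrefl 0 hpos
    · rintro ⟨j, k, hjk, hne⟩
      have h1 : 0 < ∑ k', if j ≠ k' then ‖sandwich (a j) ρ (a k')‖ else 0 := by
        refine Finset.sum_pos' (fun k' _ => by positivity) ⟨k, Finset.mem_univ k, ?_⟩
        rw [if_pos hjk]
        exact norm_pos_iff.mpr hne
      refine Finset.sum_pos' (fun j' _ => hnonneg j') ⟨j, Finset.mem_univ j, h1⟩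
end
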